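/- Telescoping bound via the exclusion Dirichlet form: fix y ∈ Z^d with 0 < |y|_1 ≤ R and a path z_0 = y, z_1, ..., z_n = −y with p(z_i − z_{i−1}) > 0 for each i. Then for every bounded measurable f : Ω → R, |∫ [η(y) − η(−y)] f(η) dν_ρ| ≤ Σ_{i=1}^n p(z_i − z_{i−1})^{−1/2} · D_se(f)^{1/2}, where D_se(f) = (1/2) Σ_{u,v} p(v−u) ∫ [f(η^{u,v}) − f(η)]^2 dν_ρ. -/

import Mathlib

open MeasureTheory

noncomputable section

namespace SEPRC

/-- The lattice `ℤ^d`. -/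
abbrev Zd (d : ℕ) := Fin d → ℤ

/-- The configuration space `Ω = {0,1}^{ℤ^d}`. -/
abbrev Cfg (d : ℕ) := Zd d → Bool

/-- Occupation variable as a real number. -/
def ind : Bool → ℝ := fun b => if b then 1 else 0

/-- The ℓ¹ norm on `ℤ^d`. -/
def l1 {d : ℕ} (y : Zd d) : ℕ := ∑ i, (y i).natAbs

/-- The shift `(τ_y η)(x) = η(x + y)`. -/
def shift {d : ℕ} (y : Zd d) (η : Cfg d) : Cfg d := fun x => η (x + y)

/-- The configuration `η^{u,v}` with the occupation variables at `u` and `v` exchanged. -/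
def swap {d : ℕ} (u v : Zd d) (η : Cfg d) : Cfg d :=
  fun x => if x = u then η v else if x = v then η u else η x

/-- `ν` is the Bernoulli product measure of density `ρ` on `{0,1}^{ℤ^d}`. -/
def IsBernoulliProduct (d : ℕ) (ρ : ℝ) (ν : Measure (Cfg d)) : Prop :=
  IsProbabilityMeasure ν ∧
  ∀ (S : Finset (Zd d)) (a : Zd d → Bool),
    ν {η | ∀ z ∈ S, η z = a z} =
      ∏ z ∈ S, ENNReal.ofReal (if a z then ρ else 1 - ρ)

/-- A cylinder (local) function: it depends on finitely many coordinates. -/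
def IsCylinder {d : ℕ} (f : Cfg d → ℝ) : Prop :=
  ∃ Λ : Finset (Zd d), ∀ η η' : Cfg d, (∀ x ∈ Λ, η x = η' x) → f η = f η'

/-!
Swapping the occupations at `u` and `v` preserves `ν_ρ`, so `∫ η(u) f = ∫ η(v) f(η^{u,v})` and
`∫ (η(u) − η(v)) f` is the integral of `η(v) (f(η^{u,v}) − f(η))`. By Cauchy–Schwarz it is at most
the square root of `∫ (f(η^{u,v}) − f(η))² ≤ p(v − u)⁻¹ D_se(f)`, where the factor `1/2` of
`D_se` is absorbed because the bonds `(u, v)` and `(v, u)` both occur in it. Summing along the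
path gives the bound.
-/

open scoped ENNReal

lemma dist_le_sum_Icc_dist {α : Type*} [PseudoMetricSpace α] (g : ℕ → α) (n : ℕ) :
    dist (g 0) (g n) ≤ ∑ i ∈ Finset.Icc 1 n, dist (g (i - 1)) (g i) := by
  convert dist_le_range_sum_dist g n using 1
  rw [Finset.range_eq_Ico, ← Finset.Ico_add_one_right_eq_Icc, ← Finset.sum_Ico_add' _ 0 n 1]
  simp

lemma abs_integral_le_sqrt_integral_sq {α : Type*} [MeasurableSpace α] {μ : Measure α}
    [IsProbabilityMeasure μ] {g : α → ℝ} (hg : MemLp g 2 μ) :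
    |∫ x, g x ∂μ| ≤ Real.sqrt (∫ x, g x ^ 2 ∂μ) := by
  refine Real.abs_le_sqrt ?_
  have := ProbabilityTheory.variance_nonneg g μ
  rw [ProbabilityTheory.variance_eq_sub hg] at this
  simpa using this

section Occupation

variable {d : ℕ}

lemma ind_sq (b : Bool) : ind b ^ 2 = ind b := by
  cases b <;> simp [ind]

lemma abs_ind_le_one (b : Bool) : |ind b| ≤ 1 := by
  cases b <;> simp [ind]

lemma measurable_ind_apply (x : Zd d) : Measurable fun η : Cfg d => ind (η x) :=
  (measurable_of_countable ind).comp (measurable_pi_apply x)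

lemma memLp_ind_apply_mul {ν : Measure (Cfg d)} {g : Cfg d → ℝ} {q : ℝ≥0∞}
    (hg : MemLp g q ν) (x : Zd d) : MemLp (fun η => ind (η x) * g η) q ν :=
  hg.of_le_mul (c := 1) ((measurable_ind_apply x).aestronglyMeasurable.mul hg.1) <|
    ae_of_all _ fun η => by
      simpa [abs_mul] using mul_le_mul_of_nonneg_right (abs_ind_le_one (η x)) (abs_nonneg (g η))

end Occupation

section Invariance

variable {d : ℕ}

def occupationCylinder (S : Finset (Zd d)) (a : Cfg d) : Set (Cfg d) := {η | ∀ z ∈ S, η z = a z}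

lemma measurableSet_occupationCylinder (S : Finset (Zd d)) (a : Cfg d) :
    MeasurableSet (occupationCylinder S a) := by
  simp only [occupationCylinder, Set.ofPred_forall]
  exact .biInter S.countable_toSet fun z _ => measurableSet_eq_fun (measurable_pi_apply z)
    measurable_const

lemma occupationCylinder_congr {S : Finset (Zd d)} {a b : Cfg d} (h : ∀ z ∈ S, a z = b z) :
    occupationCylinder S a = occupationCylinder S b := by
  ext η
  exact forall₂_congr fun z hz => by rw [h z hz]

lemma isPiSystem_occupationCylinders :
    IsPiSystem (Set.range fun Sa : Finset (Zd d) × Cfg d => occupationCylinder Sa.1 Sa.2) := by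
  classical
  rintro _ ⟨⟨S, a⟩, rfl⟩ _ ⟨⟨T, b⟩, rfl⟩ ⟨η, hηS, hηT⟩
  dsimp only at hηS hηT ⊢
  -- a configuration in the intersection can serve as the common prescription
  refine ⟨⟨S ∪ T, η⟩, ?_⟩
  rw [occupationCylinder_congr fun z hz => (hηS z hz).symm,
    occupationCylinder_congr fun z hz => (hηT z hz).symm]
  ext ξ
  simp [occupationCylinder, or_imp, forall_and]

lemma generateFrom_occupationCylinders :
    MeasurableSpace.generateFrom
      (Set.range fun Sa : Finset (Zd d) × Cfg d => occupationCylinder Sa.1 Sa.2) =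
      MeasurableSpace.pi := by
  refine le_antisymm (MeasurableSpace.generateFrom_le ?_) ?_
  · rintro _ ⟨⟨S, a⟩, rfl⟩
    exact measurableSet_occupationCylinder S a
  · refine iSup_le fun z => Measurable.comap_le ?_
    refine @measurable_to_bool _ (MeasurableSpace.generateFrom _) _
      (MeasurableSpace.measurableSet_generateFrom ⟨⟨{z}, fun _ => true⟩, ?_⟩)
    ext η
    simp [occupationCylinder]

lemma preimage_comp_occupationCylinder (σ : Equiv.Perm (Zd d)) (S : Finset (Zd d)) (a : Cfg d) :
    (fun η : Cfg d => η ∘ σ) ⁻¹' occupationCylinder S a =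
      occupationCylinder (S.map σ.toEmbedding) (a ∘ σ.symm) := by
  ext η
  simp only [occupationCylinder, Set.mem_preimage, Set.mem_ofPred_eq, Finset.mem_map_equiv,
    Function.comp_apply]
  constructor
  · intro h w hw
    simpa using h _ hw
  · intro h z hz
    simpa using h (σ z) (by simpa using hz)

theorem IsBernoulliProduct.map_comp_perm {ρ : ℝ} {ν : Measure (Cfg d)}
    (hν : IsBernoulliProduct d ρ ν) (σ : Equiv.Perm (Zd d)) :
    ν.map (fun η => η ∘ σ) = ν := by
  obtain ⟨hprob, hcyl⟩ := hν
  have hσ : Measurable fun η : Cfg d => η ∘ σ :=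
    measurable_pi_lambda _ fun z => measurable_pi_apply (σ z)
  have := Measure.isProbabilityMeasure_map (μ := ν) hσ.aemeasurable
  refine ext_of_generate_finite _ generateFrom_occupationCylinders.symm
    isPiSystem_occupationCylinders ?_ (by simp)
  rintro _ ⟨⟨S, a⟩, rfl⟩
  rw [Measure.map_apply hσ (measurableSet_occupationCylinder S a),
    preimage_comp_occupationCylinder]
  simp only [occupationCylinder, hcyl, Finset.prod_map]
  simp

lemma swap_eq_comp (u v : Zd d) (η : Cfg d) : swap u v η = η ∘ Equiv.swap u v := by
  funext x
  simp only [swap, Function.comp_apply, Equiv.swap_apply_def]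
  split_ifs <;> rfl

lemma swap_comm (u v : Zd d) : swap u v = swap v u :=
  funext fun η => by simp only [swap_eq_comp, Equiv.swap_comm]

lemma measurable_swap (u v : Zd d) : Measurable (swap u v) := by
  simp only [funext (swap_eq_comp u v)]
  exact measurable_pi_lambda _ fun z => measurable_pi_apply _

lemma measurableEmbedding_swap (u v : Zd d) : MeasurableEmbedding (swap u v) :=
  (MeasurableEquiv.ofInvolutive (swap u v)
    (fun η => funext fun x => by simp [swap_eq_comp]) (measurable_swap u v)).measurableEmbedding

theorem IsBernoulliProduct.measurePreserving_swap {ρ : ℝ} {ν : Measure (Cfg d)}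
    (hν : IsBernoulliProduct d ρ ν) (u v : Zd d) : MeasurePreserving (swap u v) ν ν :=
  ⟨measurable_swap u v, by simpa only [funext (swap_eq_comp u v)] using hν.map_comp_perm _⟩

end Invariance

section DirichletForm

variable {d : ℕ} {ν : Measure (Cfg d)} {f : Cfg d → ℝ}

def dirichletForm (ν : Measure (Cfg d)) (p : Zd d → ℝ) (f : Cfg d → ℝ) : ℝ :=
  (1 / 2) * ∑' uv : Zd d × Zd d, p (uv.2 - uv.1) * ∫ η, (f (swap uv.1 uv.2 η) - f η) ^ 2 ∂ν

lemma integral_ind_mul_eq_integral_ind_mul_swap {u v : Zd d}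
    (hswap : MeasurePreserving (swap u v) ν ν) :
    ∫ η, ind (η u) * f η ∂ν = ∫ η, ind (η v) * f (swap u v η) ∂ν := by
  rw [← hswap.integral_comp (measurableEmbedding_swap u v)]
  simp [swap]

lemma abs_integral_ind_sub_le [IsProbabilityMeasure ν] {u v : Zd d}
    (hswap : MeasurePreserving (swap u v) ν ν) (hf : MemLp f 2 ν) :
    |∫ η, ind (η u) * f η ∂ν - ∫ η, ind (η v) * f η ∂ν| ≤
      Real.sqrt (∫ η, (f (swap u v η) - f η) ^ 2 ∂ν) := by
  have hΔ : MemLp (fun η => f (swap u v η) - f η) 2 ν := (hf.comp_measurePreserving hswap).sub hf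
  have hvΔ := memLp_ind_apply_mul hΔ v
  have hdiff : ∫ η, ind (η u) * f η ∂ν - ∫ η, ind (η v) * f η ∂ν =
      ∫ η, ind (η v) * (f (swap u v η) - f η) ∂ν := by
    rw [integral_ind_mul_eq_integral_ind_mul_swap hswap, ← integral_sub]
    · simp only [mul_sub]
    · exact (memLp_ind_apply_mul (hf.comp_measurePreserving hswap) v).integrable one_le_two
    · exact (memLp_ind_apply_mul hf v).integrable one_le_two
  have hsq : ∀ η, (ind (η v) * (f (swap u v η) - f η)) ^ 2 ≤ (f (swap u v η) - f η) ^ 2 :=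
    fun η => by
      rw [mul_pow, ind_sq]
      exact mul_le_of_le_one_left (sq_nonneg _) ((le_abs_self _).trans (abs_ind_le_one _))
  rw [hdiff]
  exact (abs_integral_le_sqrt_integral_sq hvΔ).trans
    (Real.sqrt_le_sqrt (integral_mono hvΔ.integrable_sq hΔ.integrable_sq hsq))

lemma mul_integral_sq_swap_le_dirichletForm {p : Zd d → ℝ} (hp : ∀ x, 0 ≤ p x)
    (hpsym : ∀ x, p (-x) = p x)
    (hsum : Summable fun uv : Zd d × Zd d =>
      p (uv.2 - uv.1) * ∫ η, (f (swap uv.1 uv.2 η) - f η) ^ 2 ∂ν) (u v : Zd d) :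
    p (v - u) * ∫ η, (f (swap u v η) - f η) ^ 2 ∂ν ≤ dirichletForm ν p f := by
  have hterm : ∀ uv : Zd d × Zd d,
      0 ≤ p (uv.2 - uv.1) * ∫ η, (f (swap uv.1 uv.2 η) - f η) ^ 2 ∂ν :=
    fun uv => mul_nonneg (hp _) (integral_nonneg fun η => sq_nonneg _)
  rcases eq_or_ne u v with rfl | huv
  · have hid : ∀ η, swap u u η = η := fun η => by simp [swap_eq_comp]
    simpa [hid, dirichletForm] using tsum_nonneg hterm
  · have hpair := hsum.sum_le_tsum {(u, v), (v, u)} (fun uv _ => hterm uv)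
    rw [Finset.sum_pair (by simp [huv])] at hpair
    dsimp only at hpair
    rw [← neg_sub v u, hpsym, ← swap_comm u v] at hpair
    unfold dirichletForm
    linarith

end DirichletForm

theorem stmt_9_general (d : ℕ) (ρ : ℝ)
    (ν : Measure (Cfg d)) (hν : IsBernoulliProduct d ρ ν)
    (p : Zd d → ℝ) (hp01 : ∀ x, p x ∈ Set.Icc (0:ℝ) 1)
    (hpsym : ∀ x, p (-x) = p x)
    (y : Zd d)
    (n : ℕ) (z : ℕ → Zd d) (hz0 : z 0 = y) (hzn : z n = -y)
    (hstep : ∀ i : ℕ, 1 ≤ i → i ≤ n → 0 < p (z i - z (i - 1)))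
    (f : Cfg d → ℝ) (hfm : Measurable f) (Cf : ℝ) (hfb : ∀ η, |f η| ≤ Cf)
    (hsummable : Summable fun uv : Zd d × Zd d =>
      p (uv.2 - uv.1) * ∫ η, (f (swap uv.1 uv.2 η) - f η)^2 ∂ν) :
    |∫ η, (ind (η y) - ind (η (-y))) * f η ∂ν|
      ≤ (∑ i ∈ Finset.Icc 1 n, Real.sqrt (p (z i - z (i - 1)))⁻¹) *
        Real.sqrt ((1/2) * ∑' uv : Zd d × Zd d,
          p (uv.2 - uv.1) * ∫ η, (f (swap uv.1 uv.2 η) - f η)^2 ∂ν) := by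
  have := hν.1
  have hf : MemLp f 2 ν := .of_bound hfm.aestronglyMeasurable Cf (ae_of_all _ hfb)
  set a : Zd d → ℝ := fun x => ∫ η, ind (η x) * f η ∂ν
  have hsplit : ∫ η, (ind (η y) - ind (η (-y))) * f η ∂ν = a y - a (-y) := by
    simp only [sub_mul]
    exact integral_sub ((memLp_ind_apply_mul hf y).integrable one_le_two)
      ((memLp_ind_apply_mul hf (-y)).integrable one_le_two)
  have hbond : ∀ i ∈ Finset.Icc 1 n, dist (a (z (i - 1))) (a (z i)) ≤
      Real.sqrt (p (z i - z (i - 1)))⁻¹ * Real.sqrt (dirichletForm ν p f) := by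
    intro i hi
    have hpos := hstep i (Finset.mem_Icc.1 hi).1 (Finset.mem_Icc.1 hi).2
    rw [Real.dist_eq, ← Real.sqrt_mul (inv_nonneg.2 hpos.le)]
    refine (abs_integral_ind_sub_le (hν.measurePreserving_swap _ _) hf).trans
      (Real.sqrt_le_sqrt ((le_inv_mul_iff₀ hpos).2 ?_))
    exact mul_integral_sq_swap_le_dirichletForm (fun x => (hp01 x).1) hpsym hsummable _ _
  rw [hsplit, ← hzn, ← hz0, ← Real.dist_eq, Finset.sum_mul]
  exact (dist_le_sum_Icc_dist (fun i => a (z i)) n).trans (Finset.sum_le_sum hbond)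

/-- telescoping bound via the exclusion Dirichlet form: along a path
`z_0 = y, …, z_n = −y` with `p(z_i − z_{i−1}) > 0`,
`|∫ [η(y) − η(−y)] f dν_ρ| ≤ (Σ_i p(z_i − z_{i−1})^{−1/2}) · D_se(f)^{1/2}`. -/
theorem stmt_9 (d R : ℕ) (hR : 1 ≤ R) (ρ : ℝ) (hρ : ρ ∈ Set.Icc (0:ℝ) 1)
    (ν : Measure (Cfg d)) (hν : IsBernoulliProduct d ρ ν)
    (p : Zd d → ℝ) (hp01 : ∀ x, p x ∈ Set.Icc (0:ℝ) 1)
    (hpsym : ∀ x, p (-x) = p x)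
    (hpsupp : ∀ x, 0 < p x ↔ (x ≠ 0 ∧ l1 x ≤ R))
    (y : Zd d) (hy : y ≠ 0 ∧ l1 y ≤ R)
    (n : ℕ) (hn : 1 ≤ n) (z : ℕ → Zd d) (hz0 : z 0 = y) (hzn : z n = -y)
    (hstep : ∀ i : ℕ, 1 ≤ i → i ≤ n → 0 < p (z i - z (i - 1)))
    (f : Cfg d → ℝ) (hfm : Measurable f) (Cf : ℝ) (hfb : ∀ η, |f η| ≤ Cf)
    (hsummable : Summable fun uv : Zd d × Zd d =>
      p (uv.2 - uv.1) * ∫ η, (f (swap uv.1 uv.2 η) - f η)^2 ∂ν) :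
    |∫ η, (ind (η y) - ind (η (-y))) * f η ∂ν|
      ≤ (∑ i ∈ Finset.Icc 1 n, Real.sqrt (p (z i - z (i - 1)))⁻¹) *
        Real.sqrt ((1/2) * ∑' uv : Zd d × Zd d,
          p (uv.2 - uv.1) * ∫ η, (f (swap uv.1 uv.2 η) - f η)^2 ∂ν) :=
  stmt_9_general d ρ ν hν p hp01 hpsym y n z hz0 hzn hstep f hfm Cf hfb hsummable

end SEPRC
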